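/- arXiv:2311.01784 — 4 statements merged into one kernel-verified Lean document; each statement's English description precedes it below -/
import Mathlib

section
/- Let n ≥ 2 and let F be a carriage-wise polynomial function on n-quivers, given by polynomials P_ε, that is invariant under all cluster mutations μ_1,…,μ_n. Suppose two sign patterns ε₁ and ε₂ coincide except at a single pair (i,j), and there exists a vertex k ∉ {i,j} such that the (common) pattern assigns the same sign to the entries x_{ik} and x_{kj}. Then P_{ε₁} and P_{ε₂} coincide as polynomials. -/
/-!
On a carriage `S_ε` the mutation `μ_k` is a polynomial map `Φ`: the correction term of `x_{ab}`
is `(s + t) / 2 · x_{ak} x_{kb}`, where `s, t` are the signs prescribed to `x_{ak}, x_{kb}`. On a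
box inside `S_ε` it moreover lands in a single carriage `S_{μ_k ε}`, so invariance of `F` gives
`P_ε = P_{μ_k ε} ∘ Φ` there, hence as polynomials (a box with infinite sides is Zariski
dense). Both `Φ` and `μ_k ε` only see the signs of the entries at `k` and of the pairs
`x_{ab}` whose entries `x_{ak}, x_{kb}` get different signs, so flipping the sign of a pair
`x_{ij}` with `x_{ik}, x_{kj}` of the same sign changes neither.
-/

open Matrix

/-- An `n`-quiver: an `n × n` real skew-symmetric matrix. -/
def IsQuiver {n : ℕ} (X : Matrix (Fin n) (Fin n) ℝ) : Prop :=
  Xᵀ = -X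

/-- Cluster mutation at vertex `k`. -/
noncomputable def mutate {n : ℕ} (k : Fin n) (X : Matrix (Fin n) (Fin n) ℝ) :
    Matrix (Fin n) (Fin n) ℝ :=
  fun i j =>
    if i = k ∨ j = k then -X i j
    else if 0 < X i k ∧ 0 < X k j then X i j + X i k * X k j
    else if X i k < 0 ∧ X k j < 0 then X i j - X i k * X k j
    else X i j

/-- The sign `+1` or `-1` encoded by a Boolean. -/
def signOf (b : Bool) : ℝ := if b then 1 else -1

/-- Membership in the carriage determined by a sign pattern `ε` on pairs `i < j`. -/
def InCarriage {n : ℕ} (ε : Fin n → Fin n → Bool) (X : Matrix (Fin n) (Fin n) ℝ) : Prop :=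
  ∀ i j : Fin n, i < j → 0 ≤ signOf (ε i j) * X i j

/-- Index type for the entries `x_{ij}`, `i < j`, of a skew-symmetric matrix. -/
abbrev QIdx (n : ℕ) := {p : Fin n × Fin n // p.1 < p.2}

/-- The upper-triangular entries of a matrix, as a point to evaluate polynomials at. -/
def entries {n : ℕ} (X : Matrix (Fin n) (Fin n) ℝ) : QIdx n → ℝ :=
  fun p => X p.1.1 p.1.2

/-- The sign a pattern `ε` prescribes to the entry `x_{ij}` of a skew-symmetric matrix,
extended to all pairs `i ≠ j` by the convention `x_{ji} = -x_{ij}`. -/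
def extSign {n : ℕ} (ε : Fin n → Fin n → Bool) (i j : Fin n) : ℝ :=
  if i < j then signOf (ε i j) else -signOf (ε j i)

namespace QuiverMutation

open MvPolynomial Set

lemma signOf_eq_one_or_neg_one (b : Bool) : signOf b = 1 ∨ signOf b = -1 := by
  cases b <;> simp [signOf]

lemma signOf_ne_zero (b : Bool) : signOf b ≠ 0 := by
  cases b <;> norm_num [signOf]

lemma signOf_not (b : Bool) : signOf (!b) = -signOf b := by
  cases b <;> norm_num [signOf]

lemma signOf_decide_pos {s : ℝ} (hs : s = 1 ∨ s = -1) : signOf (decide (0 < s)) = s := by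
  rcases hs with rfl | rfl <;> norm_num [signOf]

variable {n : ℕ}

lemma extSign_eq_one_or_neg_one (ε : Fin n → Fin n → Bool) (a b : Fin n) :
    extSign ε a b = 1 ∨ extSign ε a b = -1 := by
  unfold extSign
  split
  · exact signOf_eq_one_or_neg_one _
  · rcases signOf_eq_one_or_neg_one (ε b a) with h | h <;> simp [h]

lemma extSign_of_lt (ε : Fin n → Fin n → Bool) {a b : Fin n} (h : a < b) :
    extSign ε a b = signOf (ε a b) :=
  if_pos h

lemma extSign_swap (ε : Fin n → Fin n → Bool) {a b : Fin n} (h : a ≠ b) :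
    extSign ε b a = -extSign ε a b := by
  unfold extSign
  rcases h.lt_or_gt with h | h <;> simp [h, asymm h]

lemma IsQuiver.apply_swap {X : Matrix (Fin n) (Fin n) ℝ} (hX : IsQuiver X) (a b : Fin n) :
    X b a = -X a b :=
  congrFun (congrFun hX a) b

lemma IsQuiver.apply_self {X : Matrix (Fin n) (Fin n) ℝ} (hX : IsQuiver X) (a : Fin n) :
    X a a = 0 := by
  linarith [IsQuiver.apply_swap hX a a]

lemma IsQuiver.extSign_mul_swap {X : Matrix (Fin n) (Fin n) ℝ} (hX : IsQuiver X)
    (ε : Fin n → Fin n → Bool) {a b : Fin n} (h : a ≠ b) :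
    extSign ε b a * X b a = extSign ε a b * X a b := by
  rw [extSign_swap ε h, IsQuiver.apply_swap hX, neg_mul_neg]

lemma InCarriage.extSign_mul_nonneg {ε : Fin n → Fin n → Bool}
    {X : Matrix (Fin n) (Fin n) ℝ} (hε : InCarriage ε X) (hX : IsQuiver X) {a b : Fin n}
    (h : a ≠ b) : 0 ≤ extSign ε a b * X a b := by
  rcases h.lt_or_gt with h | h
  · rw [extSign_of_lt ε h]; exact hε a b h
  · rw [← IsQuiver.extSign_mul_swap hX ε h.ne', extSign_of_lt ε h]; exact hε b a h

lemma isQuiver_mutate (k : Fin n) {X : Matrix (Fin n) (Fin n) ℝ} (hX : IsQuiver X) :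
    IsQuiver (mutate k X) := by
  ext a b
  simp only [transpose_apply, Matrix.neg_apply, mutate, IsQuiver.apply_swap hX a b,
    IsQuiver.apply_swap hX a k, IsQuiver.apply_swap hX k b, or_comm (a := b = k), neg_pos,
    neg_lt_zero, neg_mul_neg]
  split_ifs <;> (try casesm* _ ∧ _) <;> first | ring1 | (exfalso; first | linarith | tauto)

lemma mutate_apply_of_ne {X : Matrix (Fin n) (Fin n) ℝ} {k a b : Fin n} (ha : a ≠ k)
    (hb : b ≠ k) :
    mutate k X a b = X a b + (|X a k| * X k b + X a k * |X k b|) / 2 := by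
  have hab : ¬(a = k ∨ b = k) := by tauto
  simp only [mutate, if_neg hab]
  rcases lt_trichotomy (X a k) 0 with hu | hu | hu <;>
    rcases lt_trichotomy (X k b) 0 with hv | hv | hv <;>
    grind [abs_of_neg, abs_of_pos]

lemma abs_eq_sign_mul {s u : ℝ} (hs : s = 1 ∨ s = -1) (h : 0 ≤ s * u) : |u| = s * u := by
  rcases hs with rfl | rfl
  · rw [one_mul] at h ⊢; exact abs_of_nonneg h
  · rw [neg_one_mul] at h ⊢; exact abs_of_nonpos (neg_nonneg.1 h)

lemma mutate_apply_of_signs {X : Matrix (Fin n) (Fin n) ℝ} {k a b : Fin n} (ha : a ≠ k)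
    (hb : b ≠ k) {s t : ℝ} (hs : s = 1 ∨ s = -1) (ht : t = 1 ∨ t = -1)
    (hak : 0 ≤ s * X a k) (hkb : 0 ≤ t * X k b) :
    mutate k X a b = X a b + (s + t) / 2 * (X a k * X k b) := by
  rw [mutate_apply_of_ne ha hb, abs_eq_sign_mul hs hak, abs_eq_sign_mul ht hkb]
  ring

noncomputable def entryPoly (a b : Fin n) : MvPolynomial (QIdx n) ℝ :=
  if h : a < b then X ⟨(a, b), h⟩ else if h' : b < a then -X ⟨(b, a), h'⟩ else 0

noncomputable def ofEntries (y : QIdx n → ℝ) : Matrix (Fin n) (Fin n) ℝ :=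
  fun a b => eval y (entryPoly a b)

lemma eval_entryPoly_entries {X : Matrix (Fin n) (Fin n) ℝ} (hX : IsQuiver X) (a b : Fin n) :
    eval (entries X) (entryPoly a b) = X a b := by
  unfold entryPoly
  split_ifs with h h'
  · simp [entries]
  · simp [entries, IsQuiver.apply_swap hX a b]
  · rw [le_antisymm (not_lt.1 h') (not_lt.1 h), IsQuiver.apply_self hX, map_zero]

lemma entries_ofEntries (y : QIdx n → ℝ) : entries (ofEntries y) = y :=
  funext fun p => by simp [entries, ofEntries, entryPoly, p.2]

lemma isQuiver_ofEntries (y : QIdx n → ℝ) : IsQuiver (ofEntries y) := by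
  ext a b
  rcases lt_trichotomy a b with h | rfl | h
  · simp [ofEntries, entryPoly, h, asymm h]
  · simp [ofEntries, entryPoly]
  · simp [ofEntries, entryPoly, h, asymm h]

noncomputable def mutationPoly (ε : Fin n → Fin n → Bool) (k : Fin n) (p : QIdx n) :
    MvPolynomial (QIdx n) ℝ :=
  if p.1.1 = k ∨ p.1.2 = k then -X p
  else X p + C ((extSign ε p.1.1 k + extSign ε k p.1.2) / 2) *
    (entryPoly p.1.1 k * entryPoly k p.1.2)

lemma entries_mutate {ε : Fin n → Fin n → Bool} (k : Fin n) {X : Matrix (Fin n) (Fin n) ℝ}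
    (hX : IsQuiver X) (hε : InCarriage ε X) :
    entries (mutate k X) = fun p => eval (entries X) (mutationPoly ε k p) := by
  funext ⟨⟨a, b⟩, hab⟩
  simp only [entries, mutationPoly]
  split_ifs with hk
  · simp [mutate, hk, entries]
  · push Not at hk
    rw [mutate_apply_of_signs hk.1 hk.2 (extSign_eq_one_or_neg_one ε a k)
      (extSign_eq_one_or_neg_one ε k b) (InCarriage.extSign_mul_nonneg hε hX hk.1)
      (InCarriage.extSign_mul_nonneg hε hX hk.2.symm)]
    simp [eval_entryPoly_entries hX, entries]

noncomputable def mutationPattern (ε : Fin n → Fin n → Bool) (k : Fin n) :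
    Fin n → Fin n → Bool :=
  fun a b =>
    if a = k ∨ b = k then !ε a b
    else if extSign ε a k = extSign ε k b then decide (0 < extSign ε a k)
    else ε a b

/-- Entries at `k` have modulus `> 1` and all others modulus `< 1`, so when `x_{ak}, x_{kb}` have
the same sign, the correction term `x_{ak} x_{kb}` of the mutation dominates and dictates the
new sign of `x_{ab}`. -/
def boxInterval (k a b : Fin n) : Set ℝ :=
  if a = k ∨ b = k then Ioi 1 else Ioo 0 1

def InMutationBox (ε : Fin n → Fin n → Bool) (k : Fin n) (X : Matrix (Fin n) (Fin n) ℝ) :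
    Prop :=
  ∀ a b : Fin n, a < b → signOf (ε a b) * X a b ∈ boxInterval k a b

section InMutationBox

variable {ε : Fin n → Fin n → Bool} {k : Fin n} {X : Matrix (Fin n) (Fin n) ℝ}

lemma InMutationBox.inCarriage (hbox : InMutationBox ε k X) : InCarriage ε X := by
  intro a b hab
  have h := hbox a b hab
  unfold boxInterval at h
  split_ifs at h
  · exact zero_le_one.trans h.le
  · exact h.1.le

lemma InMutationBox.one_lt_extSign_mul (hbox : InMutationBox ε k X) (hX : IsQuiver X)
    {a b : Fin n} (hab : a ≠ b) (hk : a = k ∨ b = k) : 1 < extSign ε a b * X a b := by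
  rcases hab.lt_or_gt with h | h
  · rw [extSign_of_lt ε h]
    simpa [boxInterval, hk] using hbox a b h
  · rw [← IsQuiver.extSign_mul_swap hX ε h.ne', extSign_of_lt ε h]
    simpa [boxInterval, hk.symm] using hbox b a h

lemma InMutationBox.abs_lt_one (hbox : InMutationBox ε k X) {a b : Fin n} (hab : a < b)
    (hk : ¬(a = k ∨ b = k)) : |X a b| < 1 := by
  have h : signOf (ε a b) * X a b ∈ Ioo 0 1 := by simpa [boxInterval, hk] using hbox a b hab
  rw [abs_eq_sign_mul (signOf_eq_one_or_neg_one _) h.1.le]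
  exact h.2

lemma InMutationBox.inCarriage_mutationPattern (hbox : InMutationBox ε k X) (hX : IsQuiver X) :
    InCarriage (mutationPattern ε k) (mutate k X) := by
  intro a b hab
  simp only [mutationPattern]
  split_ifs with hk hcoh
  · rw [signOf_not, mutate, if_pos hk, neg_mul_neg]
    exact hbox.inCarriage a b hab
  all_goals
    push Not at hk
    have hs := extSign_eq_one_or_neg_one ε a k
    have ht := extSign_eq_one_or_neg_one ε k b
    have hu := hbox.one_lt_extSign_mul hX hk.1 (Or.inr rfl)
    have hv := hbox.one_lt_extSign_mul hX hk.2.symm (Or.inl rfl)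
    rw [mutate_apply_of_signs hk.1 hk.2 hs ht (zero_lt_one.trans hu).le (zero_lt_one.trans hv).le]
  · rw [signOf_decide_pos hs, ← hcoh]
    set s := extSign ε a k
    have hw : |s * X a b| < 1 := by
      rw [abs_mul, show |s| = 1 by rcases hs with h | h <;> simp [h], one_mul]
      exact hbox.abs_lt_one hab (by tauto)
    calc (0 : ℝ) ≤ s * X a b + (s * X a k) * (s * X k b) := by
          nlinarith [one_lt_mul_of_le_of_lt hu.le (hcoh ▸ hv), (abs_lt.1 hw).1]
      _ = s * (X a b + (s + s) / 2 * (X a k * X k b)) := by ring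
  · have hst : extSign ε a k + extSign ε k b = 0 := by grind
    rw [hst, zero_div, zero_mul, add_zero]
    exact hbox.inCarriage a b hab

end InMutationBox

def mutationBox (ε : Fin n → Fin n → Bool) (k : Fin n) (p : QIdx n) : Set ℝ :=
  (signOf (ε p.1.1 p.1.2) * ·) ⁻¹' boxInterval k p.1.1 p.1.2

lemma mutationBox_infinite (ε : Fin n → Fin n → Bool) (k : Fin n) (p : QIdx n) :
    (mutationBox ε k p).Infinite := by
  refine Set.Infinite.preimage ?_ (by simp [(mul_left_surjective₀ (signOf_ne_zero _)).range_eq])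
  unfold boxInterval
  split_ifs
  · exact Ioi_infinite 1
  · exact Ioo_infinite one_pos

lemma inMutationBox_ofEntries {ε : Fin n → Fin n → Bool} {k : Fin n} {y : QIdx n → ℝ}
    (hy : y ∈ Set.pi univ (mutationBox ε k)) : InMutationBox ε k (ofEntries y) := by
  intro a b hab
  simpa [mutationBox, ofEntries, entryPoly, hab] using hy ⟨(a, b), hab⟩ trivial

/-- A box with infinite sides detects polynomial identities, and on the box `μ_k` is the
polynomial map `mutationPoly ε k` landing in the carriage of `mutationPattern ε k`. Carriages
only see the pairs `a < b`, which is why `σ` need only agree with that pattern there. -/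
theorem eq_bind₁_mutationPoly_of_mutate_invariant {F : Matrix (Fin n) (Fin n) ℝ → ℝ}
    {P : (Fin n → Fin n → Bool) → MvPolynomial (QIdx n) ℝ}
    (hP : ∀ (ε : Fin n → Fin n → Bool) (X : Matrix (Fin n) (Fin n) ℝ),
      IsQuiver X → InCarriage ε X → F X = eval (entries X) (P ε))
    (hinv : ∀ (k : Fin n) (X : Matrix (Fin n) (Fin n) ℝ),
      IsQuiver X → F (mutate k X) = F X)
    (ε : Fin n → Fin n → Bool) (k : Fin n) {σ : Fin n → Fin n → Bool}
    (hσ : ∀ a b : Fin n, a < b → σ a b = mutationPattern ε k a b) :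
    P ε = bind₁ (mutationPoly ε k) (P σ) := by
  refine funext_set (mutationBox ε k) (mutationBox_infinite ε k) fun y hy => ?_
  set X := ofEntries y
  have hX : IsQuiver X := isQuiver_ofEntries y
  have hbox : InMutationBox ε k X := inMutationBox_ofEntries hy
  have hσX : InCarriage σ (mutate k X) := fun a b hab =>
    hσ a b hab ▸ hbox.inCarriage_mutationPattern hX a b hab
  calc eval y (P ε) = F X := by rw [hP ε X hX hbox.inCarriage, entries_ofEntries]
    _ = F (mutate k X) := (hinv k X hX).symm
    _ = eval (entries (mutate k X)) (P σ) := hP σ _ (isQuiver_mutate k hX) hσX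
    _ = eval y (bind₁ (mutationPoly ε k) (P σ)) := by
      rw [entries_mutate k hX hbox.inCarriage, entries_ofEntries]
      exact (eval₂Hom_bind₁ (RingHom.id ℝ) y _ _).symm

section Congr

variable {ε ε' : Fin n → Fin n → Bool} {k : Fin n}
  (hstar : ∀ a b : Fin n, a < b → (a = k ∨ b = k) → ε a b = ε' a b)
include hstar

lemma extSign_eq_of_eqOn_star {a b : Fin n} (hab : a ≠ b) (hk : a = k ∨ b = k) :
    extSign ε a b = extSign ε' a b := by
  unfold extSign
  split_ifs with h
  · rw [hstar a b h hk]
  · rw [hstar b a ((not_lt.1 h).lt_of_ne hab.symm) hk.symm]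

lemma mutationPoly_eq_of_eqOn_star : mutationPoly ε k = mutationPoly ε' k := by
  funext p
  simp only [mutationPoly]
  split_ifs with hk
  · rfl
  · push Not at hk
    rw [extSign_eq_of_eqOn_star hstar hk.1 (Or.inr rfl),
      extSign_eq_of_eqOn_star hstar hk.2.symm (Or.inl rfl)]

lemma mutationPattern_eq_of_eqOn_star
    (hrest : ∀ a b : Fin n, a < b → ¬(a = k ∨ b = k) →
      extSign ε a k ≠ extSign ε k b → ε a b = ε' a b)
    {a b : Fin n} (hab : a < b) : mutationPattern ε k a b = mutationPattern ε' k a b := by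
  by_cases hk : a = k ∨ b = k
  · simp only [mutationPattern, if_pos hk, hstar a b hab hk]
  · have hak : a ≠ k := fun h => hk (Or.inl h)
    have hbk : b ≠ k := fun h => hk (Or.inr h)
    simp only [mutationPattern, if_neg hk, ← extSign_eq_of_eqOn_star hstar hak (Or.inr rfl),
      ← extSign_eq_of_eqOn_star hstar hbk.symm (Or.inl rfl)]
    split_ifs with hcoh
    · rfl
    · exact hrest a b hab hk hcoh

end Congr

end QuiverMutation

open QuiverMutation

theorem statement1_general (n : ℕ)
    (F : Matrix (Fin n) (Fin n) ℝ → ℝ)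
    (P : (Fin n → Fin n → Bool) → MvPolynomial (QIdx n) ℝ)
    (hP : ∀ (ε : Fin n → Fin n → Bool) (X : Matrix (Fin n) (Fin n) ℝ),
      IsQuiver X → InCarriage ε X → F X = MvPolynomial.eval (entries X) (P ε))
    (hinv : ∀ (k : Fin n) (X : Matrix (Fin n) (Fin n) ℝ),
      IsQuiver X → F (mutate k X) = F X)
    (ε₁ ε₂ : Fin n → Fin n → Bool) (i j : Fin n)
    (hagree : ∀ a b : Fin n, a < b → (a, b) ≠ (i, j) → ε₁ a b = ε₂ a b)
    (k : Fin n) (hki : k ≠ i) (hkj : k ≠ j)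
    (hsame : extSign ε₁ i k = extSign ε₁ k j) :
    P ε₁ = P ε₂ := by
  have hstar : ∀ a b : Fin n, a < b → (a = k ∨ b = k) → ε₁ a b = ε₂ a b := by
    refine fun a b hab hk => hagree a b hab fun h => ?_
    obtain ⟨rfl, rfl⟩ := Prod.mk.inj h
    tauto
  have hrest : ∀ a b : Fin n, a < b → ¬(a = k ∨ b = k) →
      extSign ε₁ a k ≠ extSign ε₁ k b → ε₁ a b = ε₂ a b := by
    refine fun a b hab _ hcoh => hagree a b hab fun h => ?_
    obtain ⟨rfl, rfl⟩ := Prod.mk.inj h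
    exact hcoh hsame
  rw [eq_bind₁_mutationPoly_of_mutate_invariant hP hinv ε₁ k (σ := mutationPattern ε₁ k)
      fun _ _ _ => rfl,
    eq_bind₁_mutationPoly_of_mutate_invariant hP hinv ε₂ k
      fun a b hab => mutationPattern_eq_of_eqOn_star hstar hrest hab,
    mutationPoly_eq_of_eqOn_star hstar]

/-- If two sign patterns differ only in the sign of the single entry `x_{ij}`, and there
is a vertex `k ∉ {i, j}` such that the common pattern assigns the same sign to `x_{ik}`
and `x_{kj}`, then the corresponding polynomials of a mutation-invariant carriage-wise
polynomial function coincide. -/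
theorem statement1 (n : ℕ) (hn : 2 ≤ n)
    (F : Matrix (Fin n) (Fin n) ℝ → ℝ)
    (P : (Fin n → Fin n → Bool) → MvPolynomial (QIdx n) ℝ)
    (hP : ∀ (ε : Fin n → Fin n → Bool) (X : Matrix (Fin n) (Fin n) ℝ),
      IsQuiver X → InCarriage ε X → F X = MvPolynomial.eval (entries X) (P ε))
    (hinv : ∀ (k : Fin n) (X : Matrix (Fin n) (Fin n) ℝ),
      IsQuiver X → F (mutate k X) = F X)
    (ε₁ ε₂ : Fin n → Fin n → Bool) (i j : Fin n) (hij : i < j)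
    (hagree : ∀ a b : Fin n, a < b → (a, b) ≠ (i, j) → ε₁ a b = ε₂ a b)
    (hdiff : ε₁ i j ≠ ε₂ i j)
    (k : Fin n) (hki : k ≠ i) (hkj : k ≠ j)
    (hsame : extSign ε₁ i k = extSign ε₁ k j) :
    P ε₁ = P ε₂ :=
  statement1_general n F P hP hinv ε₁ ε₂ i j hagree k hki hkj hsame
end

section
/- Let F be a carriage-wise polynomial function on 4-quivers that is invariant under all cluster mutations μ_1, μ_2, μ_3, μ_4. Then F coincides with a single polynomial in the six entries; that is, all the polynomials P_ε (over all 2⁶ sign patterns ε) are equal. -/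
open Matrix

/-!
On the interior of a carriage `F` is the polynomial `P ε`, and polynomials that agree on a box with
infinite sides are equal. Let `ε, ε'` differ only in the sign of `x_ab`, and let `k` be a vertex
with `a → k → b` or `b → k → a` (the signs of `x_ak` and `x_kb` agree, up to orientation). Near a
point where `|x_ab|` is small and `|x_ak x_kb|` exceeds it but stays below the remaining entries,
`x'_ab = x_ab ± x_ak x_kb` has the sign of the added term, so `μ_k` maps both sides of the wall
`x_ab = 0` into one carriage, by one polynomial map. Invariance of `F` then makes `P ε` and `P ε'`
equal to the same composite polynomial. Finally, the graph of such flips on the `2^6` sign patterns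
is connected.
-/

open MvPolynomial

namespace CarriageWise

variable {n : ℕ}

lemma signOf_not (b : Bool) : signOf (!b) = -signOf b := by cases b <;> simp [signOf]

lemma abs_signOf_mul (b : Bool) (t : ℝ) : |signOf b * t| = |t| := by
  cases b <;> simp [signOf]

lemma abs_eq_signOf_mul {b : Bool} {t : ℝ} (h : 0 ≤ signOf b * t) : |t| = signOf b * t := by
  rw [← abs_signOf_mul b, abs_of_nonneg h]

lemma infinite_setOf_lt_signOf_mul_lt (b : Bool) {lo hi : ℝ} (h : lo < hi) :
    {t : ℝ | lo < signOf b * t ∧ signOf b * t < hi}.Infinite := by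
  cases b
  · convert Set.Ioo_infinite (neg_lt_neg h) using 1
    ext t
    simp only [signOf, Bool.false_eq_true, if_false, neg_one_mul, Set.mem_ofPred_eq, Set.mem_Ioo]
    constructor <;> rintro ⟨h₁, h₂⟩ <;> constructor <;> linarith
  · simp only [signOf, if_true, one_mul]
    exact Set.Ioo_infinite h

lemma eq_of_eval_eq_on_signedBox {σ : Type*} {p₁ p₂ : MvPolynomial σ ℝ} (u : σ → Bool)
    (lo hi : σ → ℝ) (hlt : ∀ q, lo q < hi q)
    (h : ∀ x : σ → ℝ, (∀ q, lo q < signOf (u q) * x q ∧ signOf (u q) * x q < hi q) →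
      eval x p₁ = eval x p₂) :
    p₁ = p₂ :=
  funext_set _ (fun q => infinite_setOf_lt_signOf_mul_lt (u q) (hlt q))
    fun x hx => h x fun q => hx q trivial

def skewOf {R : Type*} [Neg R] [Zero R] (x : QIdx n → R) : Matrix (Fin n) (Fin n) R :=
  fun i j => if h : i < j then x ⟨(i, j), h⟩ else if h' : j < i then -x ⟨(j, i), h'⟩ else 0

/-- The sign of `x_ij`, for `i ≠ j`, on the carriage of the upper sign pattern `u`. -/
def orient (u : QIdx n → Bool) (i j : Fin n) : Bool :=
  if h : i < j then u ⟨(i, j), h⟩ else if h' : j < i then !u ⟨(j, i), h'⟩ else true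

def upper (ε : Fin n → Fin n → Bool) : QIdx n → Bool := fun q => ε q.1.1 q.1.2

lemma upper_orient (u : QIdx n → Bool) : upper (orient u) = u := by
  funext q
  simp [upper, orient, q.2]

lemma skewOf_apply_fst_snd {R : Type*} [Neg R] [Zero R] (x : QIdx n → R) (q : QIdx n) :
    skewOf x q.1.1 q.1.2 = x q := by
  simp [skewOf, q.2]

lemma entries_skewOf (x : QIdx n → ℝ) : entries (skewOf x) = x :=
  funext (skewOf_apply_fst_snd x)

lemma eval_skewOf (x : QIdx n → ℝ) (i j : Fin n) :
    eval x (skewOf X i j) = skewOf x i j := by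
  unfold skewOf
  split_ifs <;> simp

lemma isQuiver_iff {A : Matrix (Fin n) (Fin n) ℝ} : IsQuiver A ↔ ∀ i j, A j i = -A i j := by
  simp [IsQuiver, ← Matrix.ext_iff]

lemma isQuiver_skewOf (x : QIdx n → ℝ) : IsQuiver (skewOf x) := by
  rw [isQuiver_iff]
  intro i j
  rcases lt_trichotomy i j with h | rfl | h
  · simp [skewOf, h, h.not_gt]
  · simp [skewOf]
  · simp [skewOf, h, h.not_gt]

lemma inCarriage_iff_upper {ε : Fin n → Fin n → Bool} {A : Matrix (Fin n) (Fin n) ℝ} :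
    InCarriage ε A ↔ ∀ q, 0 ≤ signOf (upper ε q) * A q.1.1 q.1.2 :=
  ⟨fun h q => h _ _ q.2, fun h i j hij => h ⟨(i, j), hij⟩⟩

lemma exists_signOf_orient_mul_skewOf (u : QIdx n → Bool) (x : QIdx n → ℝ) {i j : Fin n}
    (h : i ≠ j) :
    ∃ q : QIdx n, (q.1.1 = i ∨ q.1.2 = i) ∧ (q.1.1 = j ∨ q.1.2 = j) ∧
      signOf (orient u i j) * skewOf x i j = signOf (u q) * x q := by
  rcases h.lt_or_gt with h | h
  · exact ⟨⟨(i, j), h⟩, .inl rfl, .inr rfl, by simp [orient, skewOf, h]⟩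
  · refine ⟨⟨(j, i), h⟩, .inr rfl, .inl rfl, ?_⟩
    simp [orient, skewOf, h, h.not_gt, signOf_not]

lemma mutate_apply_of_ne {A : Matrix (Fin n) (Fin n) ℝ} {i j k : Fin n} (hi : i ≠ k) (hj : j ≠ k) :
    mutate k A i j = A i j + (|A i k| * A k j + A i k * |A k j|) / 2 := by
  simp only [mutate, hi, hj, or_self, if_false]
  rcases lt_trichotomy (A i k) 0 with h₁ | h₁ | h₁ <;>
    rcases lt_trichotomy (A k j) 0 with h₂ | h₂ | h₂ <;>
    split_ifs <;> grind [abs_of_neg, abs_of_pos]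

lemma isQuiver_mutate (k : Fin n) {A : Matrix (Fin n) (Fin n) ℝ} (hA : IsQuiver A) :
    IsQuiver (mutate k A) := by
  rw [isQuiver_iff] at hA ⊢
  intro i j
  by_cases hk : i = k ∨ j = k
  · simp only [mutate, hk, hk.symm, if_true, hA i j]
  · obtain ⟨hi, hj⟩ := not_or.mp hk
    rw [mutate_apply_of_ne hi hj, mutate_apply_of_ne hj hi, hA i j, hA k i, hA j k, abs_neg,
      abs_neg]
    ring

lemma abs_mutate_sub_le {A : Matrix (Fin n) (Fin n) ℝ} {i j k : Fin n} (hi : i ≠ k) (hj : j ≠ k) :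
    |mutate k A i j - A i j| ≤ |A i k| * |A k j| := by
  rw [mutate_apply_of_ne hi hj, add_sub_cancel_left, abs_div, abs_two, div_le_iff₀ two_pos]
  calc abs (|A i k| * A k j + A i k * |A k j|) ≤ abs (|A i k| * A k j) + abs (A i k * |A k j|) :=
        abs_add_le _ _
    _ = |A i k| * |A k j| * 2 := by simp only [abs_mul, abs_abs]; ring

lemma signOf_mul_mutate_of_signOf_mul_nonneg {A : Matrix (Fin n) (Fin n) ℝ} {i j k : Fin n}
    (hi : i ≠ k) (hj : j ≠ k) {b : Bool} (hik : 0 ≤ signOf b * A i k) (hkj : 0 ≤ signOf b * A k j) :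
    signOf b * mutate k A i j = signOf b * A i j + |A i k| * |A k j| := by
  rw [mutate_apply_of_ne hi hj, abs_eq_signOf_mul hik, abs_eq_signOf_mul hkj]
  ring

/-- On a carriage where `x_ik` has sign `τ i k`, the mutation `μ_k` is this polynomial
substitution, by `mutate_apply_of_ne`. -/
noncomputable def mutSubst (k : Fin n) (τ : Fin n → Fin n → Bool) (q : QIdx n) :
    MvPolynomial (QIdx n) ℝ :=
  if q.1.1 = k ∨ q.1.2 = k then -X q
  else X q + C ((signOf (τ q.1.1 k) + signOf (τ k q.1.2)) / 2) *
    (skewOf X q.1.1 k * skewOf X k q.1.2)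

lemma entries_mutate_skewOf (x : QIdx n → ℝ) (k : Fin n) (τ : Fin n → Fin n → Bool)
    (hτ : ∀ i, i ≠ k → 0 ≤ signOf (τ i k) * skewOf x i k ∧ 0 ≤ signOf (τ k i) * skewOf x k i) :
    entries (mutate k (skewOf x)) = fun q => eval x (mutSubst k τ q) := by
  funext q
  simp only [entries, mutSubst]
  by_cases hk : q.1.1 = k ∨ q.1.2 = k
  · simp [mutate, hk, skewOf_apply_fst_snd]
  · obtain ⟨hi, hj⟩ := not_or.mp hk
    rw [mutate_apply_of_ne hi hj, abs_eq_signOf_mul (hτ _ hi).1, abs_eq_signOf_mul (hτ _ hj).2]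
    simp only [hk, if_false, map_add, map_mul, eval_C, eval_X, eval_skewOf, skewOf_apply_fst_snd]
    ring

def mutPattern (k : Fin n) (p : QIdx n) (u : QIdx n → Bool) (q : QIdx n) : Bool :=
  if q.1.1 = k ∨ q.1.2 = k then !u q else if q = p then orient u p.1.1 k else u q

lemma inCarriage_mutPattern {A : Matrix (Fin n) (Fin n) ℝ} {u : QIdx n → Bool} {k : Fin n}
    {p : QIdx n} (hu : InCarriage (orient u) A)
    (hnear : ∀ i j, i ≠ j → (i = k ∨ j = k) →
      1 < signOf (orient u i j) * A i j ∧ signOf (orient u i j) * A i j < 2)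
    (hp : |A p.1.1 p.1.2| < 1) (horient : orient u p.1.1 k = orient u k p.1.2)
    (hfar : ∀ q : QIdx n, ¬(q.1.1 = k ∨ q.1.2 = k) → q ≠ p → 4 ≤ signOf (u q) * A q.1.1 q.1.2) :
    InCarriage (orient (mutPattern k p u)) (mutate k A) := by
  rw [inCarriage_iff_upper, upper_orient] at hu ⊢
  intro q
  by_cases hk : q.1.1 = k ∨ q.1.2 = k
  · simpa [mutPattern, mutate, hk, signOf_not] using hu q
  obtain ⟨hi, hj⟩ := not_or.mp hk
  obtain ⟨hik₁, hik₂⟩ := hnear _ _ hi (.inr rfl)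
  obtain ⟨hkj₁, hkj₂⟩ := hnear _ _ (Ne.symm hj) (.inl rfl)
  have hprod : 1 < |A q.1.1 k| * |A k q.1.2| ∧ |A q.1.1 k| * |A k q.1.2| < 4 := by
    rw [abs_eq_signOf_mul (zero_le_one.trans hik₁.le), abs_eq_signOf_mul (zero_le_one.trans hkj₁.le)]
    constructor <;> nlinarith
  by_cases hq : q = p
  · subst hq
    simp only [mutPattern, hk, if_false, if_true]
    rw [horient] at hik₁ ⊢
    rw [signOf_mul_mutate_of_signOf_mul_nonneg hi hj (by linarith) (by linarith)]
    have := neg_abs_le (signOf (orient u k q.1.2) * A q.1.1 q.1.2)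
    rw [abs_signOf_mul] at this
    linarith
  · simp only [mutPattern, hk, hq, if_false]
    have hdiff := abs_mutate_sub_le (A := A) hi hj
    rw [← abs_signOf_mul (u q), mul_sub] at hdiff
    linarith [(abs_le.mp hdiff).1, hfar q hk hq]

/-- The box in which the wall `x_p = 0` is crossed: entries at `k` have modulus in `(1, 2)`,
`x_p` in `(0, 1)` and the others in `(4, 5)`, so that `|x_ik x_kj| ∈ (1, 4)` beats `|x_p|` and is
beaten by the other entries. -/
noncomputable def boxLow (k : Fin n) (p q : QIdx n) : ℝ :=
  if q.1.1 = k ∨ q.1.2 = k then 1 else if q = p then 0 else 4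

section WallBox

variable {k : Fin n} {p : QIdx n} {u : QIdx n → Bool} {x : QIdx n → ℝ}
  (hx : ∀ q, boxLow k p q < signOf (u q) * x q ∧ signOf (u q) * x q < boxLow k p q + 1)
include hx

lemma inCarriage_orient_skewOf_of_box : InCarriage (orient u) (skewOf x) := by
  refine inCarriage_iff_upper.2 fun q => ?_
  rw [upper_orient, skewOf_apply_fst_snd]
  have : 0 ≤ boxLow k p q := by unfold boxLow; split_ifs <;> norm_num
  linarith [(hx q).1]

lemma signOf_orient_mul_skewOf_of_box {i j : Fin n} (hij : i ≠ j) (hk : i = k ∨ j = k) :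
    1 < signOf (orient u i j) * skewOf x i j ∧ signOf (orient u i j) * skewOf x i j < 2 := by
  obtain ⟨q, hqi, hqj, heq⟩ := exists_signOf_orient_mul_skewOf u x hij
  have hqk : q.1.1 = k ∨ q.1.2 = k := by rcases hk with rfl | rfl <;> assumption
  simpa [heq, boxLow, hqk, one_add_one_eq_two] using hx q

lemma inCarriage_mutPattern_skewOf_of_box (hka : k ≠ p.1.1) (hkb : k ≠ p.1.2)
    (horient : orient u p.1.1 k = orient u k p.1.2) :
    InCarriage (orient (mutPattern k p u)) (mutate k (skewOf x)) := by
  have hpk : ¬(p.1.1 = k ∨ p.1.2 = k) := by rintro (h | h) <;> simp_all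
  refine inCarriage_mutPattern (inCarriage_orient_skewOf_of_box hx)
    (fun _ _ => signOf_orient_mul_skewOf_of_box hx) ?_ horient fun q hqk hqp => ?_
  · have := hx p
    simp only [boxLow, hpk, if_false, if_true, zero_add] at this
    rw [skewOf_apply_fst_snd, ← abs_signOf_mul (u p), abs_lt]
    constructor <;> linarith [this.1]
  · have := (hx q).1
    simp only [boxLow, hqk, hqp, if_false] at this
    rw [skewOf_apply_fst_snd]
    exact this.le

end WallBox

def flipAt (u : QIdx n → Bool) (p : QIdx n) : QIdx n → Bool := Function.update u p (!u p)

def CanFlip (u : QIdx n → Bool) (p : QIdx n) : Prop :=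
  ∃ k, k ≠ p.1.1 ∧ k ≠ p.1.2 ∧ orient u p.1.1 k = orient u k p.1.2

instance (u : QIdx n → Bool) (p : QIdx n) : Decidable (CanFlip u p) := by
  unfold CanFlip
  infer_instance

lemma orient_update_of_ne {u : QIdx n → Bool} {p : QIdx n} {b : Bool} {k : Fin n}
    (hk₁ : k ≠ p.1.1) (hk₂ : k ≠ p.1.2) (i : Fin n) :
    orient (Function.update u p b) i k = orient u i k ∧
      orient (Function.update u p b) k i = orient u k i := by
  simp [orient, Subtype.ext_iff, Prod.ext_iff, hk₁, hk₂]

section CarriagewisePolynomial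

variable {F : Matrix (Fin n) (Fin n) ℝ → ℝ} {P : (Fin n → Fin n → Bool) → MvPolynomial (QIdx n) ℝ}
  (hP : ∀ (ε : Fin n → Fin n → Bool) (A : Matrix (Fin n) (Fin n) ℝ),
    IsQuiver A → InCarriage ε A → F A = eval (entries A) (P ε))
include hP

lemma eq_of_upper_eq {ε₁ ε₂ : Fin n → Fin n → Bool} (h : upper ε₁ = upper ε₂) : P ε₁ = P ε₂ := by
  refine eq_of_eval_eq_on_signedBox (upper ε₁) 0 1 (fun _ => one_pos) fun x hx => ?_
  have hcar : ∀ ε, upper ε = upper ε₁ → InCarriage ε (skewOf x) := fun ε hε =>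
    inCarriage_iff_upper.2 fun q => by rw [hε, skewOf_apply_fst_snd]; exact (hx q).1.le
  rw [← entries_skewOf x, ← hP _ _ (isQuiver_skewOf x) (hcar ε₁ rfl),
    ← hP _ _ (isQuiver_skewOf x) (hcar ε₂ h.symm)]

variable (hinv : ∀ (k : Fin n) (A : Matrix (Fin n) (Fin n) ℝ), IsQuiver A → F (mutate k A) = F A)
include hinv

lemma eq_bind₁_mutSubst {u : QIdx n → Bool} {p : QIdx n} {k : Fin n} (hka : k ≠ p.1.1)
    (hkb : k ≠ p.1.2) (horient : orient u p.1.1 k = orient u k p.1.2) :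
    P (orient u) = bind₁ (mutSubst k (orient u)) (P (orient (mutPattern k p u))) := by
  refine eq_of_eval_eq_on_signedBox u (boxLow k p) (boxLow k p · + 1) (fun _ => lt_add_one _)
    fun x hx => ?_
  have hA : IsQuiver (skewOf x) := isQuiver_skewOf x
  have hnear {i j : Fin n} (hij : i ≠ j) (hk : i = k ∨ j = k) :=
    zero_le_one.trans (signOf_orient_mul_skewOf_of_box hx hij hk).1.le
  have hsubst : entries (mutate k (skewOf x)) = fun q => eval x (mutSubst k (orient u) q) :=
    entries_mutate_skewOf x k _ fun i hi => ⟨hnear hi (.inr rfl), hnear (Ne.symm hi) (.inl rfl)⟩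
  calc eval x (P (orient u))
      = F (skewOf x) := by rw [hP _ _ hA (inCarriage_orient_skewOf_of_box hx), entries_skewOf]
    _ = F (mutate k (skewOf x)) := (hinv k _ hA).symm
    _ = _ := by
      rw [hP _ _ (isQuiver_mutate k hA) (inCarriage_mutPattern_skewOf_of_box hx hka hkb horient),
        hsubst]
      simpa using (eval₂Hom_bind₁ (RingHom.id ℝ) x _ _).symm

lemma eq_of_canFlip {u : QIdx n → Bool} {p : QIdx n} (h : CanFlip u p) :
    P (orient (flipAt u p)) = P (orient u) := by
  obtain ⟨k, hka, hkb, horient⟩ := h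
  have hsame := orient_update_of_ne (u := u) (b := !u p) hka hkb
  have hsubst : mutSubst k (orient (flipAt u p)) = mutSubst k (orient u) := by
    funext q
    simp only [mutSubst, flipAt, (hsame _).1, (hsame _).2]
  have hpattern : mutPattern k p (flipAt u p) = mutPattern k p u := by
    funext q
    simp only [mutPattern, flipAt, (hsame _).1]
    split_ifs with hqk hqp
    · rw [Function.update_of_ne]
      rintro rfl
      rcases hqk with h | h <;> simp_all
    · rfl
    · rw [Function.update_of_ne hqp]
  rw [eq_bind₁_mutSubst hP hinv hka hkb horient,
    eq_bind₁_mutSubst hP hinv hka hkb (by rw [flipAt, (hsame _).1, (hsame _).2]; exact horient),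
    hsubst, hpattern]

end CarriagewisePolynomial

def flipStep (s : Finset (QIdx n → Bool)) : Finset (QIdx n → Bool) :=
  s.biUnion fun u => insert u ((Finset.univ.filter (CanFlip u)).image (flipAt u))

set_option maxRecDepth 10000 in
/-- The flip graph on sign patterns of 4-quivers is connected, of radius 6 around the all-`true`
pattern. (For 3-quivers it has two components.) -/
lemma flipStep_iterate_eq_univ :
    flipStep^[6] {fun _ => true} = (Finset.univ : Finset (QIdx 4 → Bool)) := by
  decide +kernel

lemma eq_of_forall_canFlip {α : Type*} (f : (QIdx 4 → Bool) → α)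
    (hf : ∀ u p, CanFlip u p → f (flipAt u p) = f u) (u v : QIdx 4 → Bool) : f u = f v := by
  have hroot : ∀ m, ∀ w ∈ flipStep^[m] {fun _ => true}, f w = f fun _ => true := by
    intro m
    induction m with
    | zero => simp
    | succ m ih =>
      intro w hw
      rw [Function.iterate_succ_apply', flipStep, Finset.mem_biUnion] at hw
      obtain ⟨v, hv, hw⟩ := hw
      rw [Finset.mem_insert, Finset.mem_image] at hw
      rcases hw with rfl | ⟨p, hp, rfl⟩
      · exact ih w hv
      · rw [hf _ _ (Finset.mem_filter.1 hp).2, ih v hv]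
  have hall := hroot 6
  rw [flipStep_iterate_eq_univ] at hall
  exact (hall u (Finset.mem_univ u)).trans (hall v (Finset.mem_univ v)).symm

end CarriageWise

/-- A carriage-wise polynomial function on 4-quivers invariant under all cluster
mutations is given by a single polynomial: all the polynomials `P ε` coincide. -/
theorem statement4
    (F : Matrix (Fin 4) (Fin 4) ℝ → ℝ)
    (P : (Fin 4 → Fin 4 → Bool) → MvPolynomial (QIdx 4) ℝ)
    (hP : ∀ (ε : Fin 4 → Fin 4 → Bool) (X : Matrix (Fin 4) (Fin 4) ℝ),
      IsQuiver X → InCarriage ε X → F X = MvPolynomial.eval (entries X) (P ε))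
    (hinv : ∀ (k : Fin 4) (X : Matrix (Fin 4) (Fin 4) ℝ),
      IsQuiver X → F (mutate k X) = F X) :
    ∀ ε₁ ε₂ : Fin 4 → Fin 4 → Bool, P ε₁ = P ε₂ := by
  intro ε₁ ε₂
  rw [CarriageWise.eq_of_upper_eq hP (CarriageWise.upper_orient (CarriageWise.upper ε₁)).symm,
    CarriageWise.eq_of_upper_eq hP (CarriageWise.upper_orient (CarriageWise.upper ε₂)).symm]
  exact CarriageWise.eq_of_forall_canFlip (fun u => P (CarriageWise.orient u))
    (fun _ _ h => CarriageWise.eq_of_canFlip hP hinv h) _ _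
end

section
/- Let F : ℝ³ × ℝ³ → ℝ be a function such that: (i) F(Y₁, V) = F(Y₂, V) whenever Y₁·V = Y₂·V, and (ii) F(Y, V₁) = F(Y, V₂) whenever Y·V₁ = Y·V₂, where (x,y,z)·(u,v,w) = xw + yv + zu. Then there exists a function f : ℝ → ℝ such that F(Y, V) = f(Y·V) for all Y, V ∈ ℝ³. -/
/-- The bilinear pairing `(x,y,z) · (u,v,w) = xw + yv + zu` on `ℝ³ × ℝ³`. -/
def pairing (Y V : Fin 3 → ℝ) : ℝ := Y 0 * V 2 + Y 1 * V 1 + Y 2 * V 0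

/-!
Changing one argument of `F` at a time without changing the pairing leaves `F` unchanged, so it
suffices to connect every pair `(Y, V)` with `Y · V = t` to the normal form `(t e₁, e₃)` by such
moves. Going through a common partner `W` with `Y · W = t` and `W₂ = 1` (hence `t e₁ · W = t`)
does this whenever `(Y₁, Y₂) ≠ 0`; a pair with `Y = (a, 0, 0)` is first moved, through the partner
`(0, 0, V₂)`, to `((a, 1, 0), (0, 0, V₂))`.
-/

def IsPairingInvariant (F : (Fin 3 → ℝ) → (Fin 3 → ℝ) → ℝ) : Prop :=
  (∀ Y₁ Y₂ V, pairing Y₁ V = pairing Y₂ V → F Y₁ V = F Y₂ V) ∧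
    ∀ Y V₁ V₂, pairing Y V₁ = pairing Y V₂ → F Y V₁ = F Y V₂

lemma exists_pairing_eq_of_ne_zero {Y : Fin 3 → ℝ} (hY : Y 1 ≠ 0 ∨ Y 2 ≠ 0) (t : ℝ) :
    ∃ W : Fin 3 → ℝ, W 2 = 1 ∧ pairing Y W = t := by
  have hnorm : Y 1 ^ 2 + Y 2 ^ 2 ≠ 0 := by rcases hY with h | h <;> positivity
  set s := (t - Y 0) / (Y 1 ^ 2 + Y 2 ^ 2)
  refine ⟨![s * Y 2, s * Y 1, 1], rfl, ?_⟩
  simp only [pairing, s, Matrix.cons_val]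
  field_simp
  ring

namespace IsPairingInvariant

variable {F : (Fin 3 → ℝ) → (Fin 3 → ℝ) → ℝ}

lemma eq_of_common_partner (hF : IsPairingInvariant F) {Y V Y' V' W : Fin 3 → ℝ}
    (hYW : pairing Y W = pairing Y V) (hY'W : pairing Y' W = pairing Y V)
    (hY'V' : pairing Y' V' = pairing Y V) : F Y V = F Y' V' :=
  calc F Y V = F Y W := hF.2 _ _ _ hYW.symm
    _ = F Y' W := hF.1 _ _ _ (hYW.trans hY'W.symm)
    _ = F Y' V' := hF.2 _ _ _ (hY'W.trans hY'V'.symm)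

lemma eq_normalForm_of_ne_zero (hF : IsPairingInvariant F) {Y : Fin 3 → ℝ}
    (hY : Y 1 ≠ 0 ∨ Y 2 ≠ 0) (V : Fin 3 → ℝ) :
    F Y V = F ![pairing Y V, 0, 0] ![0, 0, 1] := by
  obtain ⟨W, hW, hYW⟩ := exists_pairing_eq_of_ne_zero hY (pairing Y V)
  exact hF.eq_of_common_partner hYW (by simp [pairing, hW]) (by simp [pairing])

lemma eq_normalForm (hF : IsPairingInvariant F) (Y V : Fin 3 → ℝ) :
    F Y V = F ![pairing Y V, 0, 0] ![0, 0, 1] := by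
  by_cases hY : Y 1 ≠ 0 ∨ Y 2 ≠ 0
  · exact hF.eq_normalForm_of_ne_zero hY V
  obtain ⟨hY₁, hY₂⟩ : Y 1 = 0 ∧ Y 2 = 0 := by simpa only [not_or, not_not] using hY
  have hpair : pairing ![Y 0, 1, 0] ![0, 0, V 2] = pairing Y V := by simp [pairing, hY₁, hY₂]
  rw [hF.eq_of_common_partner (by simp [pairing, hY₁, hY₂]) hpair hpair,
    hF.eq_normalForm_of_ne_zero (by simp) _, hpair]

end IsPairingInvariant

/-- If `F : ℝ³ × ℝ³ → ℝ` depends on `Y` only through `Y · V` (for each fixed `V`) and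
on `V` only through `Y · V` (for each fixed `Y`), then `F` is a function of `Y · V`. -/
theorem statement6 (F : (Fin 3 → ℝ) → (Fin 3 → ℝ) → ℝ)
    (h1 : ∀ Y₁ Y₂ V : Fin 3 → ℝ, pairing Y₁ V = pairing Y₂ V → F Y₁ V = F Y₂ V)
    (h2 : ∀ Y V₁ V₂ : Fin 3 → ℝ, pairing Y V₁ = pairing Y V₂ → F Y V₁ = F Y V₂) :
    ∃ f : ℝ → ℝ, ∀ Y V : Fin 3 → ℝ, F Y V = f (pairing Y V) :=
  ⟨fun t => F ![t, 0, 0] ![0, 0, 1], IsPairingInvariant.eq_normalForm ⟨h1, h2⟩⟩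
end

section
/- Parametrize 3-quivers by (x,y,z) ∈ ℝ³ via the skew-symmetric matrix X with first row (0, x, −y), second row (−x, 0, z), third row (y, −z, 0). Define F : ℝ³ → ℝ by F(x,y,z) = x² + y² + z² − xyz if at least two of x, y, z are nonnegative, and F(x,y,z) = x² + y² + z² + xyz if at least two of x, y, z are nonpositive. Then F is well defined and is invariant under the cluster mutations μ_1, μ_2, μ_3 of 3-quivers: F is unchanged when (x,y,z) is replaced by the parameters of μ_k(X) for each k ∈ {1,2,3}. -/
open Matrix

/-- The 3-quiver with parameters `(x, y, z)`. -/
def quiv3 (x y z : ℝ) : Matrix (Fin 3) (Fin 3) ℝ :=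
  !![0, x, -y; -x, 0, z; y, -z, 0]

/-- At least two of `x`, `y`, `z` are nonnegative. -/
def TwoNonneg (x y z : ℝ) : Prop :=
  (0 ≤ x ∧ 0 ≤ y) ∨ (0 ≤ x ∧ 0 ≤ z) ∨ (0 ≤ y ∧ 0 ≤ z)

/-- At least two of `x`, `y`, `z` are nonpositive. -/
def TwoNonpos (x y z : ℝ) : Prop :=
  (x ≤ 0 ∧ y ≤ 0) ∨ (x ≤ 0 ∧ z ≤ 0) ∨ (y ≤ 0 ∧ z ≤ 0)

/-!
A triple with two nonnegative and two nonpositive coordinates has a zero coordinate, so the two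
formulas for `F` agree where both apply. Mutation at a vertex negates the parameters `a, b` of the
two arrows through it and shifts the opposite parameter `c` by `∓ ab` exactly when `a` and `b` have
the same strict sign. Then the triple passes from one sign region to the other, and the shift is
what makes the formulas agree: `(c + ab)² - ab (c + ab) = c² + abc`. Otherwise `ab ≤ 0`, the sign
of `c` decides the region on both sides and `xyz` does not change. Regions and formulas are
symmetric in `x, y, z`, so all three mutations reduce to the one at the first vertex.
-/

lemma twoNonneg_or_twoNonpos (x y z : ℝ) : TwoNonneg x y z ∨ TwoNonpos x y z := by
  unfold TwoNonneg TwoNonpos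
  rcases le_total 0 x with hx | hx <;> rcases le_total 0 y with hy | hy <;>
    rcases le_total 0 z with hz | hz <;> tauto

lemma mul_mul_eq_zero_of_twoNonneg_of_twoNonpos {x y z : ℝ} (hn : TwoNonneg x y z)
    (hp : TwoNonpos x y z) : x * y * z = 0 := by
  have : x = 0 ∨ y = 0 ∨ z = 0 := by
    unfold TwoNonneg TwoNonpos at *
    rcases hn with ⟨h1, h2⟩ | ⟨h1, h2⟩ | ⟨h1, h2⟩ <;>
      rcases hp with ⟨h3, h4⟩ | ⟨h3, h4⟩ | ⟨h3, h4⟩ <;>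
      first
      | exact Or.inl (le_antisymm ‹_› ‹_›)
      | exact Or.inr (Or.inl (le_antisymm ‹_› ‹_›))
      | exact Or.inr (Or.inr (le_antisymm ‹_› ‹_›))
  rcases this with h | h | h <;> simp [h]

lemma twoNonneg_rotate {x y z : ℝ} : TwoNonneg x y z ↔ TwoNonneg y z x := by
  unfold TwoNonneg; tauto

lemma twoNonneg_swap {x y z : ℝ} : TwoNonneg x y z ↔ TwoNonneg x z y := by
  unfold TwoNonneg; tauto

lemma twoNonpos_rotate {x y z : ℝ} : TwoNonpos x y z ↔ TwoNonpos y z x := by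
  unfold TwoNonpos; tauto

lemma twoNonpos_swap {x y z : ℝ} : TwoNonpos x y z ↔ TwoNonpos x z y := by
  unfold TwoNonpos; tauto

lemma twoNonneg_of_mul_nonpos {x y z : ℝ} (hxy : x * y ≤ 0) (hz : 0 ≤ z) :
    TwoNonneg x y z := by
  rcases mul_nonpos_iff.1 hxy with ⟨hx, -⟩ | ⟨-, hy⟩
  exacts [Or.inr (Or.inl ⟨hx, hz⟩), Or.inr (Or.inr ⟨hy, hz⟩)]

lemma twoNonpos_of_mul_nonpos {x y z : ℝ} (hxy : x * y ≤ 0) (hz : z ≤ 0) :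
    TwoNonpos x y z := by
  rcases mul_nonpos_iff.1 hxy with ⟨-, hy⟩ | ⟨hx, -⟩
  exacts [Or.inr (Or.inr ⟨hy, hz⟩), Or.inr (Or.inl ⟨hx, hz⟩)]

open Classical in
noncomputable def cubicInvariant (x y z : ℝ) : ℝ :=
  if TwoNonneg x y z then x ^ 2 + y ^ 2 + z ^ 2 - x * y * z
  else x ^ 2 + y ^ 2 + z ^ 2 + x * y * z

lemma cubicInvariant_of_twoNonneg {x y z : ℝ} (h : TwoNonneg x y z) :
    cubicInvariant x y z = x ^ 2 + y ^ 2 + z ^ 2 - x * y * z := by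
  simp [cubicInvariant, h]

lemma cubicInvariant_of_twoNonpos {x y z : ℝ} (h : TwoNonpos x y z) :
    cubicInvariant x y z = x ^ 2 + y ^ 2 + z ^ 2 + x * y * z := by
  by_cases hn : TwoNonneg x y z
  · rw [cubicInvariant_of_twoNonneg hn, mul_mul_eq_zero_of_twoNonneg_of_twoNonpos hn h]; ring
  · simp [cubicInvariant, hn]

lemma cubicInvariant_rotate (x y z : ℝ) : cubicInvariant x y z = cubicInvariant y z x := by
  rcases twoNonneg_or_twoNonpos x y z with h | h
  · rw [cubicInvariant_of_twoNonneg h, cubicInvariant_of_twoNonneg (twoNonneg_rotate.1 h)]; ring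
  · rw [cubicInvariant_of_twoNonpos h, cubicInvariant_of_twoNonpos (twoNonpos_rotate.1 h)]; ring

lemma cubicInvariant_swap (x y z : ℝ) : cubicInvariant x y z = cubicInvariant x z y := by
  rcases twoNonneg_or_twoNonpos x y z with h | h
  · rw [cubicInvariant_of_twoNonneg h, cubicInvariant_of_twoNonneg (twoNonneg_swap.1 h)]; ring
  · rw [cubicInvariant_of_twoNonpos h, cubicInvariant_of_twoNonpos (twoNonpos_swap.1 h)]; ring

/-- The new value of the arrow `c` opposite to the mutated vertex, whose other two arrows are
`a` and `b` (in the parametrization of `quiv3`). -/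
noncomputable def mutateOpposite (a b c : ℝ) : ℝ :=
  if a < 0 ∧ b < 0 then c + a * b else if 0 < a ∧ 0 < b then c - a * b else c

lemma cubicInvariant_neg_neg_mutateOpposite (a b c : ℝ) :
    cubicInvariant (-a) (-b) (mutateOpposite a b c) = cubicInvariant a b c := by
  unfold mutateOpposite
  split_ifs with hneg hpos
  · rw [cubicInvariant_of_twoNonneg (Or.inl ⟨by linarith, by linarith⟩),
      cubicInvariant_of_twoNonpos (Or.inl ⟨hneg.1.le, hneg.2.le⟩)]
    ring
  · rw [cubicInvariant_of_twoNonpos (Or.inl ⟨by linarith, by linarith⟩),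
      cubicInvariant_of_twoNonneg (Or.inl ⟨hpos.1.le, hpos.2.le⟩)]
    ring
  · have hab : a * b ≤ 0 := not_lt.1 fun h => (mul_pos_iff.1 h).elim hpos hneg
    have hab' : -a * -b ≤ 0 := by rwa [neg_mul_neg]
    rcases le_total 0 c with hc | hc
    · rw [cubicInvariant_of_twoNonneg (twoNonneg_of_mul_nonpos hab' hc),
        cubicInvariant_of_twoNonneg (twoNonneg_of_mul_nonpos hab hc)]
      ring
    · rw [cubicInvariant_of_twoNonpos (twoNonpos_of_mul_nonpos hab' hc),
        cubicInvariant_of_twoNonpos (twoNonpos_of_mul_nonpos hab hc)]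
      ring

/-- There is a well-defined function `F` on 3-quivers equal to `x² + y² + z² − xyz`
when at least two of `x, y, z` are nonnegative and to `x² + y² + z² + xyz` when at
least two are nonpositive, and `F` is invariant under the cluster mutations
`μ₁, μ₂, μ₃` of 3-quivers. -/
theorem statement11 :
    ∃ F : ℝ → ℝ → ℝ → ℝ,
      (∀ x y z : ℝ, TwoNonneg x y z → F x y z = x ^ 2 + y ^ 2 + z ^ 2 - x * y * z) ∧
      (∀ x y z : ℝ, TwoNonpos x y z → F x y z = x ^ 2 + y ^ 2 + z ^ 2 + x * y * z) ∧
      (∀ (k : Fin 3) (x y z : ℝ),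
        F (mutate k (quiv3 x y z) 0 1) (-(mutate k (quiv3 x y z) 0 2))
            (mutate k (quiv3 x y z) 1 2) = F x y z) := by
  refine ⟨cubicInvariant, fun x y z => cubicInvariant_of_twoNonneg,
    fun x y z => cubicInvariant_of_twoNonpos, ?_⟩
  intro k x y z
  fin_cases k <;> simp [mutate, quiv3]
  · exact cubicInvariant_neg_neg_mutateOpposite x y z
  · have h : (if 0 < x ∧ 0 < z then -y + x * z else if x < 0 ∧ z < 0 then -y - x * z else -y)
        = -mutateOpposite x z y := by
      unfold mutateOpposite
      split_ifs <;> grind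
    rw [h, neg_neg, cubicInvariant_swap, cubicInvariant_neg_neg_mutateOpposite,
      cubicInvariant_swap]
  · rw [cubicInvariant_rotate]
    exact (cubicInvariant_neg_neg_mutateOpposite y z x).trans (cubicInvariant_rotate x y z).symm
end
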